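/- Fix k ∈ ℕ. For every H ∈ ℝ and every η > 0 there exists α = α(H,η,k) > 0 such that every probability density g on ℝ^k satisfying ∫ x g(x) dx = 0, ∫ (x⊗x) g(x) dx = I_k, and ∫ g log g dx ≤ H has |ĝ(ξ)| ≤ 1 − α for all ξ ∈ ℝ^k with |ξ| ≥ η. -/

import Mathlib

/-!
Write `ĝ(ξ) = |ĝ(ξ)| e^{iθ}`, so that `|ĝ(ξ)| = ∫ cos (θ + 2π x·ξ) g(x) dx`; it suffices to find
`β > 0` such that `g` puts mass at least `1/2` where `1 - cos (θ + 2π x·ξ) ≥ β`. By Chebyshev,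
mass at most `1/4` lies outside the ball `|x| ≤ 2√k`. Inside the ball, `cos (θ + 2π x·ξ) > 1 - β`
only on `O(|ξ|)` slabs orthogonal to `ξ`, each of width `O(√β / |ξ|)`; for `|ξ| ≥ η` their union
has volume `O(√β)`, uniformly in `ξ`. Finally the entropy bound prevents `g` from putting mass
`1/4` on a set of tiny volume: Gibbs' inequality against the uniform density on that set and
against the Gaussian off it would push `∫ g log g` above `H`.
-/

open MeasureTheory ProbabilityTheory Filter Set Classical
open scoped ENNReal NNReal Topology BigOperators

noncomputable section

/-- The Fourier transform `ĝ(ξ) = ∫ e^{-2πi x·ξ} g(x) dx` on `ℝ^k`. -/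
def ft {k : ℕ} (g : (Fin k → ℝ) → ℝ) (ξ : Fin k → ℝ) : ℂ :=
  ∫ x : Fin k → ℝ,
    Complex.exp (((-2) * Real.pi * (∑ i, x i * ξ i) : ℝ) * Complex.I) * (g x : ℂ)

open Real

lemma mul_log_add_sub_le_mul_log {u t : ℝ} (hu : 0 ≤ u) (ht : 0 < t) :
    u * log t + (u - t) ≤ u * log u := by
  rcases hu.eq_or_lt with rfl | hu
  · simpa using ht.le
  have h := mul_le_mul_of_nonneg_left (log_le_sub_one_of_pos (div_pos ht hu)) hu.le
  rw [log_div ht.ne' hu.ne', mul_sub_one, mul_div_cancel₀ _ hu.ne'] at h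
  linarith

lemma integral_mul_log_add_sub_le {α : Type*} [MeasurableSpace α] {ν : Measure α} {g ψ : α → ℝ}
    (hg0 : ∀ x, 0 ≤ g x) (hψ0 : ∀ x, 0 < ψ x) (hg : Integrable g ν) (hψ : Integrable ψ ν)
    (hgψ : Integrable (fun x => g x * log (ψ x)) ν)
    (hgg : Integrable (fun x => g x * log (g x)) ν) :
    ∫ x, g x * log (ψ x) ∂ν + ∫ x, g x ∂ν - ∫ x, ψ x ∂ν ≤ ∫ x, g x * log (g x) ∂ν := by
  have hgψ' : Integrable (fun x => g x - ψ x) ν := hg.sub hψ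
  rw [add_sub_assoc, ← integral_sub hg hψ, ← integral_add hgψ hgψ']
  exact integral_mono (hgψ.add hgψ') hgg fun x => mul_log_add_sub_le_mul_log (hg0 x) (hψ0 x)

lemma mul_log_div_le_setIntegral_mul_log {α : Type*} [MeasurableSpace α] {μ : Measure α}
    {g : α → ℝ} {S : Set α} (hg0 : ∀ x, 0 ≤ g x) (hg : IntegrableOn g S μ)
    (hgg : IntegrableOn (fun x => g x * log (g x)) S μ) (hS : μ S ≠ ∞)
    (hm : 0 < ∫ x in S, g x ∂μ) :
    (∫ x in S, g x ∂μ) * log ((∫ x in S, g x ∂μ) / μ.real S) ≤ ∫ x in S, g x * log (g x) ∂μ := by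
  set m := ∫ x in S, g x ∂μ
  have hS0 : μ.real S ≠ 0 := by
    intro h
    rw [measureReal_eq_zero_iff hS, ← Measure.restrict_eq_zero] at h
    simp [m, h] at hm
  have h := integral_mul_log_add_sub_le (ν := μ.restrict S) (ψ := fun _ => m / μ.real S) hg0
    (fun _ => div_pos hm (lt_of_le_of_ne measureReal_nonneg (Ne.symm hS0))) hg
    (integrableOn_const hS) (hg.mul_const _) hgg
  simp only [integral_mul_const, setIntegral_const, smul_eq_mul] at h
  rwa [mul_div_cancel₀ m hS0, add_sub_cancel_right] at h

lemma exp_neg_sum_sq_div_two_eq_prod (k : ℕ) (x : Fin k → ℝ) :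
    rexp (-(∑ i, x i ^ 2) / 2) = ∏ i, rexp (-(1 / 2) * x i ^ 2) := by
  rw [← exp_sum, neg_div, Finset.sum_div, ← Finset.sum_neg_distrib]
  congr 1
  exact Finset.sum_congr rfl fun i _ => by ring

lemma integral_exp_neg_sum_sq_div_two (k : ℕ) :
    ∫ x : Fin k → ℝ, rexp (-(∑ i, x i ^ 2) / 2) = √(2 * π) ^ k := by
  simp_rw [exp_neg_sum_sq_div_two_eq_prod]
  rw [integral_fintype_prod_volume_eq_pow (fun t : ℝ => rexp (-(1 / 2) * t ^ 2)), integral_gaussian]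
  norm_num [mul_comm]

lemma integrable_exp_neg_sum_sq_div_two (k : ℕ) :
    Integrable (fun x : Fin k → ℝ => rexp (-(∑ i, x i ^ 2) / 2)) := by
  simp_rw [exp_neg_sum_sq_div_two_eq_prod]
  exact Integrable.fintype_prod (f := fun _ t => rexp (-(1 / 2) * t ^ 2))
    fun _ => integrable_exp_neg_mul_sq (by norm_num)

lemma neg_half_sub_le_setIntegral_mul_log {k : ℕ} {M : ℝ} {g : (Fin k → ℝ) → ℝ}
    (hg0 : ∀ x, 0 ≤ g x) (hg : Integrable g) (hQi : Integrable fun x => (∑ i, x i ^ 2) * g x)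
    (hQ : ∫ x, (∑ i, x i ^ 2) * g x ≤ M) (hgg : Integrable fun x => g x * log (g x))
    (S : Set (Fin k → ℝ)) :
    -(M / 2) - √(2 * π) ^ k ≤ ∫ x in S, g x * log (g x) := by
  have hQ0 : ∀ x : Fin k → ℝ, 0 ≤ (∑ i, x i ^ 2) * g x := fun x =>
    mul_nonneg (Finset.sum_nonneg fun i _ => sq_nonneg _) (hg0 x)
  have hψ := integrable_exp_neg_sum_sq_div_two k
  have hgψ : Integrable fun x : Fin k → ℝ => g x * log (rexp (-(∑ i, x i ^ 2) / 2)) := by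
    simp_rw [log_exp]
    exact (hQi.div_const (-2)).congr (ae_of_all _ fun x => by simp only; ring)
  have h := integral_mul_log_add_sub_le (ν := volume.restrict S) hg0 (fun _ => exp_pos _)
    hg.integrableOn hψ.integrableOn hgψ.integrableOn hgg.integrableOn
  have hQS : ∫ x in S, g x * log (rexp (-(∑ i, x i ^ 2) / 2))
      = -(∫ x in S, (∑ i, x i ^ 2) * g x) / 2 := by
    simp_rw [log_exp, ← integral_neg, ← integral_div]
    congr 1; ext x; ring
  have hQM : ∫ x in S, (∑ i, x i ^ 2) * g x ≤ M :=
    (setIntegral_le_integral hQi (ae_of_all _ hQ0)).trans hQ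
  have hψS : ∫ x in S, rexp (-(∑ i, x i ^ 2) / 2) ≤ √(2 * π) ^ k :=
    integral_exp_neg_sum_sq_div_two k ▸
      setIntegral_le_integral hψ (ae_of_all _ fun _ => (exp_pos _).le)
  have hgS : 0 ≤ ∫ x in S, g x := setIntegral_nonneg_of_ae (ae_of_all _ hg0)
  linarith

def smallSetVolume (k : ℕ) (M H : ℝ) : ℝ := rexp (-4 * (|H| + M / 2 + √(2 * π) ^ k + 1))

/-- If `S` carried more than a quarter of the mass, Gibbs' inequality on `S` (against the uniform
density) and on `Sᶜ` (against the Gaussian) would force the entropy above `H`. -/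
lemma setIntegral_le_quarter_of_volume_le {k : ℕ} {M H : ℝ} {g : (Fin k → ℝ) → ℝ}
    (hg0 : ∀ x, 0 ≤ g x) (hg : Integrable g)
    (hQi : Integrable fun x => (∑ i, x i ^ 2) * g x) (hQ : ∫ x, (∑ i, x i ^ 2) * g x ≤ M)
    (hgg : Integrable fun x => g x * log (g x)) (hH : ∫ x, g x * log (g x) ≤ H)
    {S : Set (Fin k → ℝ)} (hS : MeasurableSet S)
    (hvol : volume S ≤ ENNReal.ofReal (smallSetVolume k M H)) :
    ∫ x in S, g x ≤ 1 / 4 := by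
  set m := ∫ x in S, g x
  by_contra! hm
  have hSfin : volume S ≠ ∞ := ne_top_of_le_ne_top ENNReal.ofReal_ne_top hvol
  have hin := mul_log_div_le_setIntegral_mul_log hg0 hg.integrableOn hgg.integrableOn hSfin
    (by linarith)
  have hout := neg_half_sub_le_setIntegral_mul_log hg0 hg hQi hQ hgg Sᶜ
  have hsplit := integral_add_compl hS hgg
  have hδ0 : 0 < volume.real S := by
    refine lt_of_le_of_ne measureReal_nonneg fun h => ?_
    rw [eq_comm, measureReal_eq_zero_iff hSfin, ← Measure.restrict_eq_zero] at h
    norm_num [m, h] at hm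
  have hδ : log (volume.real S) ≤ -4 * (|H| + M / 2 + √(2 * π) ^ k + 1) :=
    (log_le_iff_le_exp hδ0).2 (ENNReal.toReal_le_of_le_ofReal (exp_pos _).le hvol)
  have hM : 0 ≤ M := hQ.trans' <| integral_nonneg fun x =>
    mul_nonneg (Finset.sum_nonneg fun i _ => sq_nonneg _) (hg0 x)
  have hC : 0 ≤ |H| + M / 2 + √(2 * π) ^ k + 1 := by positivity
  rw [log_div (by linarith) hδ0.ne', mul_sub] at hin
  nlinarith [self_sub_one_le_mul_log (by linarith : 0 ≤ m), le_abs_self H]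

/-- The reflection sending `u` to a coordinate vector straightens the slab
`{‖y‖ ≤ R, ⟪u, y⟫ ∈ T}` into a subset of the box `T × [-R, R]ⁿ⁻¹`. -/
lemma volume_setOf_norm_le_inner_mem_le {ι : Type*} [Fintype ι] {u : EuclideanSpace ℝ ι}
    (hu : ‖u‖ = 1) (R : ℝ) {T : Set ℝ} (hT : MeasurableSet T) :
    volume {y : EuclideanSpace ℝ ι | ‖y‖ ≤ R ∧ inner ℝ u y ∈ T}
      ≤ volume T * ENNReal.ofReal (2 * R) ^ (Fintype.card ι - 1) := by
  obtain ⟨i₀, -⟩ : ∃ i, u i ≠ 0 := by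
    by_contra! h
    simp [show u = 0 from PiLp.ext h] at hu
  set e := EuclideanSpace.single i₀ (1 : ℝ)
  set f := Submodule.reflection (ℝ ∙ (u - e))ᗮ
  have hfu : f u = e := Submodule.reflection_sub (by simp [e, hu])
  set W : Set (ι → ℝ) := univ.pi fun i => if i = i₀ then T else Icc (-R) R
  have hW : MeasurableSet W := MeasurableSet.univ_pi fun i => by
    split_ifs
    exacts [hT, measurableSet_Icc]
  have hmp := (PiLp.volume_preserving_ofLp ι).comp f.measurePreserving
  have hsub : {y : EuclideanSpace ℝ ι | ‖y‖ ≤ R ∧ inner ℝ u y ∈ T} ⊆ (WithLp.ofLp ∘ f) ⁻¹' W := by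
    rintro y ⟨hyR, hyT⟩ i -
    dsimp only
    split_ifs with h
    · subst h
      rwa [← f.inner_map_map, hfu, EuclideanSpace.inner_single_left, map_one, one_mul] at hyT
    · exact abs_le.1 <| (PiLp.norm_apply_le (f y) i).trans (by rwa [f.norm_map])
  calc _ ≤ volume ((WithLp.ofLp ∘ f) ⁻¹' W) := measure_mono hsub
    _ = ∏ i, volume (if i = i₀ then T else Icc (-R) R) := by
      rw [hmp.measure_preimage hW.nullMeasurableSet, volume_pi_pi]
    _ = volume T * ENNReal.ofReal (2 * R) ^ (Fintype.card ι - 1) := by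
      rw [← Finset.mul_prod_erase _ _ (Finset.mem_univ i₀), if_pos rfl,
        Finset.prod_congr rfl fun i hi => by rw [if_neg (Finset.ne_of_mem_erase hi), volume_Icc],
        Finset.prod_const, Finset.card_erase_of_mem (Finset.mem_univ _), Finset.card_univ]
      ring_nf

lemma exists_int_abs_sub_lt_of_one_sub_lt_cos {β s : ℝ} (h : 1 - β < cos s) :
    ∃ n : ℤ, |s - 2 * π * n| < π * √β ∧ |(n : ℝ)| ≤ |s| / (2 * π) + 1 / 2 := by
  have hπ := pi_pos
  set n := round (s / (2 * π))
  have hn : |s / (2 * π) - n| ≤ 1 / 2 := abs_sub_round _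
  have hr : s - 2 * π * n = 2 * π * (s / (2 * π) - n) := by field_simp
  refine ⟨n, ?_, ?_⟩
  · have hrπ : |s - 2 * π * n| ≤ π := by
      rw [hr, abs_mul, abs_of_pos (by positivity)]
      nlinarith
    have hcos := cos_le_one_sub_mul_cos_sq hrπ
    rw [show s - 2 * π * n = s - n * (2 * π) by ring, cos_sub_int_mul_two_pi] at hcos
    have hβ : 2 * (s - n * (2 * π)) ^ 2 < π ^ 2 * β := by
      rw [← div_lt_iff₀' (by positivity), mul_div_right_comm]
      linarith
    rw [show π * √β = √(π ^ 2 * β) by rw [sqrt_mul (sq_nonneg _), sqrt_sq hπ.le],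
      lt_sqrt (abs_nonneg _), sq_abs]
    nlinarith [sq_nonneg (s - n * (2 * π))]
  · have := abs_sub_abs_le_abs_sub (n : ℝ) (s / (2 * π))
    rw [abs_sub_comm (n : ℝ), abs_div, abs_of_pos (by positivity : 0 < 2 * π)] at this
    linarith

lemma setOf_one_sub_lt_cos_subset_iUnion_ball {β θ L R : ℝ} (hθ : |θ| ≤ π) (hL : 0 < L) :
    {t : ℝ | |t| ≤ R ∧ 1 - β < cos (θ + 2 * π * (L * t))}
      ⊆ ⋃ n ∈ Finset.Icc (-((⌈L * R⌉₊ + 1 : ℕ) : ℤ)) (⌈L * R⌉₊ + 1 : ℕ),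
          Metric.ball ((2 * π * n - θ) / (2 * π * L)) (√β / (2 * L)) := by
  have hπ := pi_pos
  rintro t ⟨ht, hcos⟩
  obtain ⟨n, hn, hnN⟩ := exists_int_abs_sub_lt_of_one_sub_lt_cos hcos
  refine mem_iUnion₂.2 ⟨n, Finset.mem_Icc.2 ?_, ?_⟩
  · have hs : |θ + 2 * π * (L * t)| ≤ π + 2 * π * (L * R) := by
      refine (abs_add_le _ _).trans (add_le_add hθ ?_)
      rw [abs_mul (2 * π), abs_mul L, abs_of_pos hL, abs_of_pos (by positivity : 0 < 2 * π)]
      gcongr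
    have hn' : |(n : ℝ)| ≤ (⌈L * R⌉₊ + 1 : ℕ) := by
      refine hnN.trans ?_
      rw [div_add' _ _ _ (by positivity), div_le_iff₀ (by positivity)]
      have := Nat.le_ceil (L * R)
      push_cast
      nlinarith
    rw [← Int.cast_abs, ← Int.cast_natCast, Int.cast_le] at hn'
    exact abs_le.1 hn'
  · rw [Metric.mem_ball, dist_eq,
      show t - (2 * π * n - θ) / (2 * π * L) = (θ + 2 * π * (L * t) - 2 * π * n) / (2 * π * L) by
        field_simp; ring,
      abs_div, abs_of_pos (by positivity : 0 < 2 * π * L), div_lt_iff₀ (by positivity)]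
    refine hn.trans_eq ?_
    field_simp

lemma volume_setOf_one_sub_lt_cos_le {β θ L R : ℝ} (hθ : |θ| ≤ π) (hL : 0 < L) (hR : 0 ≤ R) :
    volume {t : ℝ | |t| ≤ R ∧ 1 - β < cos (θ + 2 * π * (L * t))}
      ≤ ENNReal.ofReal ((2 * R + 5 / L) * √β) := by
  set N := ⌈L * R⌉₊ + 1
  have hN : (2 * N + 1 : ℝ) ≤ 2 * (L * R) + 5 := by
    have := Nat.ceil_lt_add_one (by positivity : 0 ≤ L * R)
    push_cast [N]
    linarith
  calc _ ≤ ∑ n ∈ Finset.Icc (-(N : ℤ)) N,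
        volume (Metric.ball ((2 * π * n - θ) / (2 * π * L)) (√β / (2 * L))) :=
        (measure_mono (setOf_one_sub_lt_cos_subset_iUnion_ball hθ hL)).trans
          (measure_biUnion_finset_le _ _)
    _ = ENNReal.ofReal ((2 * N + 1) * (√β / L)) := by
      simp_rw [Real.volume_ball, Finset.sum_const, Int.card_Icc, nsmul_eq_mul]
      rw [show ((N : ℤ) + 1 - -N).toNat = 2 * N + 1 by omega, ← ENNReal.ofReal_natCast,
        ← ENNReal.ofReal_mul (by positivity)]
      push_cast
      field_simp
    _ ≤ ENNReal.ofReal ((2 * R + 5 / L) * √β) := by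
      refine ENNReal.ofReal_le_ofReal ?_
      calc (2 * N + 1) * (√β / L) ≤ (2 * (L * R) + 5) * (√β / L) := by gcongr
        _ = (2 * R + 5 / L) * √β := by field_simp

lemma volume_setOf_sum_sq_le_one_sub_lt_cos_le {k : ℕ} {β θ R : ℝ} {ξ : Fin k → ℝ}
    (hθ : |θ| ≤ π) (hξ : 0 < √(∑ i, ξ i ^ 2)) (hR : 0 ≤ R) :
    volume {x : Fin k → ℝ | ∑ i, x i ^ 2 ≤ R ^ 2 ∧ 1 - β < cos (θ + 2 * π * ∑ i, x i * ξ i)}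
      ≤ ENNReal.ofReal ((2 * R + 5 / √(∑ i, ξ i ^ 2)) * √β) * ENNReal.ofReal (2 * R) ^ (k - 1) := by
  set L := √(∑ i, ξ i ^ 2)
  have hnorm : ∀ x : Fin k → ℝ, ‖(WithLp.toLp 2 x : EuclideanSpace ℝ (Fin k))‖ = √(∑ i, x i ^ 2) :=
    fun x => by simp [EuclideanSpace.norm_eq]
  set u : EuclideanSpace ℝ (Fin k) := L⁻¹ • WithLp.toLp 2 ξ
  have hu : ‖u‖ = 1 := by
    rw [norm_smul, hnorm, norm_inv, norm_of_nonneg hξ.le, inv_mul_cancel₀ hξ.ne']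
  have hinner : ∀ x : Fin k → ℝ, inner ℝ u (WithLp.toLp 2 x) = L⁻¹ * ∑ i, x i * ξ i := fun x => by
    simp [u, real_inner_smul_left, EuclideanSpace.inner_toLp_toLp, dotProduct]
  set T := {t : ℝ | |t| ≤ R ∧ 1 - β < cos (θ + 2 * π * (L * t))}
  have hT : MeasurableSet T := by measurability
  have hsub : {x : Fin k → ℝ | ∑ i, x i ^ 2 ≤ R ^ 2 ∧ 1 - β < cos (θ + 2 * π * ∑ i, x i * ξ i)}
      ⊆ WithLp.toLp 2 ⁻¹' {y | ‖y‖ ≤ R ∧ inner ℝ u y ∈ T} := by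
    rintro x ⟨hxR, hcos⟩
    have hx : ‖(WithLp.toLp 2 x : EuclideanSpace ℝ (Fin k))‖ ≤ R := by
      rw [hnorm]
      exact (sqrt_le_left hR).2 hxR
    refine ⟨hx, (abs_real_inner_le_norm u _).trans (by rwa [hu, one_mul]), ?_⟩
    rwa [hinner, mul_inv_cancel_left₀ hξ.ne']
  calc _ ≤ volume {y | ‖y‖ ≤ R ∧ inner ℝ u y ∈ T} :=
        (measure_mono hsub).trans ((PiLp.volume_preserving_toLp (Fin k)).measure_preimage_le _)
    _ ≤ volume T * ENNReal.ofReal (2 * R) ^ (Fintype.card (Fin k) - 1) :=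
        volume_setOf_norm_le_inner_mem_le hu R hT
    _ ≤ _ := by
      rw [Fintype.card_fin]
      gcongr
      exact volume_setOf_one_sub_lt_cos_le hθ hξ hR

/-- The constant `β` with `(4√M + 5/η) (4√M)^(k-1) √β ≤ smallSetVolume k M H`: where the phase
`cos (θ + 2π x·ξ)` exceeds `1 - β` inside the ball of radius `2√M`, the slabs are too thin to carry
a quarter of the mass. -/
def cosGap (k : ℕ) (M H η : ℝ) : ℝ :=
  (smallSetVolume k M H / ((4 * √M + 5 / η) * (4 * √M) ^ (k - 1) + 1)) ^ 2

lemma cosGap_pos (k : ℕ) (M H : ℝ) {η : ℝ} (hη : 0 < η) : 0 < cosGap k M H η := by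
  unfold cosGap smallSetVolume
  positivity

lemma volume_setOf_one_sub_cosGap_lt_cos_le {k : ℕ} {M H η θ : ℝ} {ξ : Fin k → ℝ}
    (hθ : |θ| ≤ π) (hη : 0 < η) (hξ : η ≤ √(∑ i, ξ i ^ 2)) :
    volume {x : Fin k → ℝ | ∑ i, x i ^ 2 ≤ (2 * √M) ^ 2 ∧
        1 - cosGap k M H η < cos (θ + 2 * π * ∑ i, x i * ξ i)}
      ≤ ENNReal.ofReal (smallSetVolume k M H) := by
  set δ := smallSetVolume k M H
  set D := (4 * √M + 5 / η) * (4 * √M) ^ (k - 1)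
  have hD : 0 ≤ D := by positivity
  have hδ : 0 < δ := exp_pos _
  refine (volume_setOf_sum_sq_le_one_sub_lt_cos_le hθ (hη.trans_le hξ) (by positivity)).trans ?_
  rw [← ENNReal.ofReal_pow (by positivity), ← ENNReal.ofReal_mul (by positivity)]
  refine ENNReal.ofReal_le_ofReal ?_
  rw [cosGap, sqrt_sq (by positivity)]
  calc (2 * (2 * √M) + 5 / √(∑ i, ξ i ^ 2)) * (δ / (D + 1)) * (2 * (2 * √M)) ^ (k - 1)
      ≤ D * (δ / (D + 1)) := by
        rw [show 2 * (2 * √M) = 4 * √M by ring, mul_right_comm]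
        gcongr ?_ * _
        exact mul_le_mul_of_nonneg_right (by gcongr) (by positivity)
    _ ≤ δ := by
        rw [mul_div_assoc', div_le_iff₀ (by positivity)]
        nlinarith

section Mass

variable {α : Type*} [MeasurableSpace α] {μ : Measure α} {g : α → ℝ}

lemma mul_setIntegral_setOf_lt_le_integral_mul {q : α → ℝ} (hg0 : ∀ x, 0 ≤ g x)
    (hg : Integrable g μ) (hq : Measurable q) (hq0 : ∀ x, 0 ≤ q x)
    (hqg : Integrable (fun x => q x * g x) μ) (c : ℝ) :
    c * ∫ x in {x | c < q x}, g x ∂μ ≤ ∫ x, q x * g x ∂μ := by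
  rw [← integral_const_mul]
  calc _ ≤ ∫ x in {x | c < q x}, q x * g x ∂μ :=
        setIntegral_mono_on (hg.integrableOn.const_mul c) hqg.integrableOn
          (measurableSet_lt measurable_const hq) fun x hx =>
            mul_le_mul_of_nonneg_right hx.le (hg0 x)
    _ ≤ ∫ x, q x * g x ∂μ :=
        setIntegral_le_integral hqg (ae_of_all _ fun x => mul_nonneg (hq0 x) (hg0 x))

lemma one_sub_le_setIntegral_compl_union (hg0 : ∀ x, 0 ≤ g x) (hg : Integrable g μ)
    (hg1 : ∫ x, g x ∂μ = 1) {A B : Set α} (hA : MeasurableSet A) (hB : MeasurableSet B) :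
    1 - (∫ x in A, g x ∂μ + ∫ x in B, g x ∂μ) ≤ ∫ x in (A ∪ B)ᶜ, g x ∂μ := by
  have hsplit := integral_add_compl (hA.union hB) hg
  have hunion : ∫ x in A ∪ B, g x ∂μ ≤ ∫ x in A, g x ∂μ + ∫ x in B, g x ∂μ := by
    rw [← integral_add_measure hg.integrableOn hg.integrableOn]
    exact integral_mono_measure (Measure.restrict_union_le A B) (ae_of_all _ hg0)
      (Integrable.add_measure hg.restrict hg.restrict)
  linarith

lemma mul_setIntegral_le_integral_mul {h : α → ℝ} {β : ℝ} {S : Set α} (hS : MeasurableSet S)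
    (hg0 : ∀ x, 0 ≤ g x) (hg : Integrable g μ) (hh0 : ∀ x, 0 ≤ h x)
    (hhg : Integrable (fun x => h x * g x) μ) (hβ : ∀ x ∈ S, β ≤ h x) :
    β * ∫ x in S, g x ∂μ ≤ ∫ x, h x * g x ∂μ := by
  rw [← integral_const_mul]
  calc _ ≤ ∫ x in S, h x * g x ∂μ := setIntegral_mono_on (hg.integrableOn.const_mul β)
        hhg.integrableOn hS fun x hx => mul_le_mul_of_nonneg_right (hβ x hx) (hg0 x)
    _ ≤ ∫ x, h x * g x ∂μ :=
        setIntegral_le_integral hhg (ae_of_all _ fun x => mul_nonneg (hh0 x) (hg0 x))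

end Mass

lemma integral_cos_mul_le {k : ℕ} {M H η θ : ℝ} {g : (Fin k → ℝ) → ℝ} {ξ : Fin k → ℝ}
    (hg0 : ∀ x, 0 ≤ g x) (hg : Integrable g) (hg1 : ∫ x, g x = 1)
    (hQi : Integrable fun x => (∑ i, x i ^ 2) * g x) (hQ : ∫ x, (∑ i, x i ^ 2) * g x ≤ M)
    (hM : 0 < M) (hgg : Integrable fun x => g x * log (g x)) (hH : ∫ x, g x * log (g x) ≤ H)
    (hθ : |θ| ≤ π) (hη : 0 < η) (hξ : η ≤ √(∑ i, ξ i ^ 2)) :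
    ∫ x, cos (θ + 2 * π * ∑ i, x i * ξ i) * g x ≤ 1 - cosGap k M H η / 2 := by
  set β := cosGap k M H η
  set R := 2 * √M
  set F : (Fin k → ℝ) → ℝ := fun x => cos (θ + 2 * π * ∑ i, x i * ξ i)
  have hQm : Measurable fun x : Fin k → ℝ => ∑ i, x i ^ 2 := by fun_prop
  have hFm : Measurable F := by fun_prop
  have hFg : Integrable fun x => F x * g x :=
    hg.bdd_mul (c := 1) hFm.aestronglyMeasurable (ae_of_all _ fun x => abs_cos_le_one _)
  set A := {x : Fin k → ℝ | R ^ 2 < ∑ i, x i ^ 2}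
  set B := {x : Fin k → ℝ | ∑ i, x i ^ 2 ≤ R ^ 2 ∧ 1 - β < F x}
  have hAm : MeasurableSet A := measurableSet_lt measurable_const hQm
  have hBm : MeasurableSet B :=
    (measurableSet_le hQm measurable_const).inter (measurableSet_lt measurable_const hFm)
  have hA : ∫ x in A, g x ≤ 1 / 4 := by
    have hmarkov := mul_setIntegral_setOf_lt_le_integral_mul hg0 hg hQm
      (fun x => Finset.sum_nonneg fun i _ => sq_nonneg (x i)) hQi (R ^ 2)
    have hR2 : R ^ 2 = 4 * M := by rw [mul_pow, sq_sqrt hM.le]; ring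
    refine le_of_mul_le_mul_left ?_ (by positivity : 0 < R ^ 2)
    calc _ ≤ M := hmarkov.trans hQ
      _ = R ^ 2 * (1 / 4) := by rw [hR2]; ring
  have hB : ∫ x in B, g x ≤ 1 / 4 := setIntegral_le_quarter_of_volume_le hg0 hg hQi hQ hgg hH
    hBm (volume_setOf_one_sub_cosGap_lt_cos_le hθ hη hξ)
  have hG := one_sub_le_setIntegral_compl_union hg0 hg hg1 hAm hBm
  have hFg' : Integrable fun x => (1 - F x) * g x := by
    simp_rw [sub_mul, one_mul]
    exact hg.sub hFg
  have hgap := mul_setIntegral_le_integral_mul (hAm.union hBm).compl hg0 hg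
    (fun x => sub_nonneg.2 (cos_le_one _)) hFg' (β := β) fun x hx => by
      simp only [A, B, mem_compl_iff, mem_union, mem_ofPred_eq, not_or, not_lt, not_and] at hx
      linarith [hx.2 hx.1]
  have hsplit : ∫ x, (1 - F x) * g x = 1 - ∫ x, F x * g x := by
    simp_rw [sub_mul, one_mul]
    rw [integral_sub hg hFg, hg1]
  nlinarith [cosGap_pos k M H hη]

lemma norm_ft_eq_integral_cos {k : ℕ} {g : (Fin k → ℝ) → ℝ} (hg : Integrable g)
    (ξ : Fin k → ℝ) :
    ‖ft g ξ‖ = ∫ x, cos ((ft g ξ).arg + 2 * π * ∑ i, x i * ξ i) * g x := by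
  have hint : Integrable fun x : Fin k → ℝ =>
      Complex.exp (((-2) * π * (∑ i, x i * ξ i) : ℝ) * Complex.I) * (g x : ℂ) :=
    hg.ofReal.bdd_mul (c := 1) (by fun_prop : Continuous _).aestronglyMeasurable
      (ae_of_all _ fun x => by rw [Complex.norm_exp_ofReal_mul_I])
  obtain ⟨θ, hθ⟩ : ∃ θ, (ft g ξ).arg = θ := ⟨_, rfl⟩
  have hrot : ‖ft g ξ‖ = (Complex.exp (-θ * Complex.I) * ft g ξ).re := by
    have h := Complex.norm_mul_exp_arg_mul_I (ft g ξ)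
    rw [hθ] at h
    conv_rhs => rw [← h]
    rw [mul_left_comm, ← Complex.exp_add, neg_mul, neg_add_cancel, Complex.exp_zero, mul_one,
      Complex.ofReal_re]
  rw [hθ, hrot, ft, ← integral_const_mul, ← RCLike.re_to_complex, ← integral_re (hint.const_mul _)]
  congr 1
  ext x
  rw [← mul_assoc, ← Complex.exp_add,
    show -(θ : ℂ) * Complex.I + ((-2 * π * ∑ i, x i * ξ i : ℝ) : ℂ) * Complex.I
      = ((-(θ + 2 * π * ∑ i, x i * ξ i) : ℝ) : ℂ) * Complex.I by push_cast; ring,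
    RCLike.re_to_complex, Complex.re_mul_ofReal, Complex.exp_ofReal_mul_I_re, cos_neg]

theorem stmt13_general (k : ℕ) (H : ℝ) (η : ℝ) (hη : 0 < η) :
    ∃ α : ℝ, 0 < α ∧
    ∀ g : (Fin k → ℝ) → ℝ,
      Measurable g → (∀ x, 0 ≤ g x) → (∫ x, g x = 1) →
      (∀ i, Integrable fun x => x i * g x) → (∀ i, ∫ x, x i * g x = 0) →
      (∀ i j, Integrable fun x => x i * x j * g x) →
      (∀ i j, ∫ x, x i * x j * g x = if i = j then (1:ℝ) else 0) →
      Integrable (fun x => g x * Real.log (g x)) →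
      (∫ x, g x * Real.log (g x) ≤ H) →
      ∀ ξ : Fin k → ℝ, η ≤ Real.sqrt (∑ i, ξ i ^ 2) →
        ‖ft g ξ‖ ≤ 1 - α := by
  refine ⟨cosGap k k H η / 2, half_pos (cosGap_pos k k H hη), ?_⟩
  intro g _ hg0 hg1 _ _ hm2i hm2 hgg hH ξ hξ
  have hg : Integrable g := Integrable.of_integral_ne_zero (by rw [hg1]; exact one_ne_zero)
  have hk : (0 : ℝ) < k := by
    rcases Nat.eq_zero_or_pos k with rfl | hk
    · simp at hξ
      linarith
    · exact_mod_cast hk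
  have hsq : ∀ x : Fin k → ℝ, (∑ i, x i ^ 2) * g x = ∑ i, x i * x i * g x := fun x => by
    simp_rw [Finset.sum_mul, sq]
  have hQi : Integrable fun x => (∑ i, x i ^ 2) * g x := by
    simp_rw [hsq]
    exact integrable_finsetSum _ fun i _ => hm2i i i
  have hQ : ∫ x, (∑ i, x i ^ 2) * g x = k := by
    simp_rw [hsq]
    simp [integral_finsetSum _ fun i _ => hm2i i i, hm2]
  rw [norm_ft_eq_integral_cos hg]
  exact integral_cos_mul_le hg0 hg hg1 hQi hQ.le hk hgg hH (Complex.abs_arg_le_pi _) hη hξ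

/-- uniform decay of characteristic functions away from the origin,
under moment and entropy bounds. -/
theorem stmt13 (k : ℕ) (hk : 0 < k) (H : ℝ) (η : ℝ) (hη : 0 < η) :
    ∃ α : ℝ, 0 < α ∧
    ∀ g : (Fin k → ℝ) → ℝ,
      Measurable g → (∀ x, 0 ≤ g x) → (∫ x, g x = 1) →
      (∀ i, Integrable fun x => x i * g x) → (∀ i, ∫ x, x i * g x = 0) →
      (∀ i j, Integrable fun x => x i * x j * g x) →
      (∀ i j, ∫ x, x i * x j * g x = if i = j then (1:ℝ) else 0) →
      Integrable (fun x => g x * Real.log (g x)) →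
      (∫ x, g x * Real.log (g x) ≤ H) →
      ∀ ξ : Fin k → ℝ, η ≤ Real.sqrt (∑ i, ξ i ^ 2) →
        ‖ft g ξ‖ ≤ 1 - α :=
  stmt13_general k H η hη
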